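/- Suppose the word σ = (s_1,…,s_n) contains every simple reflection of S (i.e., for each s ∈ S there is some i with s_i = s). Then the unique maximal element of ^JW is the only w ∈ ^JW satisfying φ_{J,σ,(1,1,…,1)}(w) = w. Consequently c_J(σ) is a monic polynomial of degree n in q: c_J(σ) = q^n + (terms of degree strictly less than n). -/

import Mathlib

open Polynomial

namespace Paper

variable {B W : Type*} [Group W] {M : CoxeterMatrix B} (cs : CoxeterSystem M W)

/-- The standard parabolic subgroup `W_J` generated by the simple reflections in `J`. -/
def WJ (J : Set B) : Subgroup W :=
  Subgroup.closure (cs.simple '' J)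

/-- `w` is a minimal-length representative of its right coset `W_J w`, i.e. `w ∈ ᴶW`. -/
def IsMinRep (J : Set B) (w : W) : Prop :=
  ∀ u ∈ WJ cs J, cs.length w ≤ cs.length (u * w)

open scoped Classical in
/-- `w ·_J s`: equals `w * s` if `w * s ∈ ᴶW`, and `w` otherwise. -/
noncomputable def mulJ (J : Set B) (w : W) (i : B) : W :=
  if IsMinRep cs J (w * cs.simple i) then w * cs.simple i else w

/-- `φ_{J,s,b}` : for `b = 1` the Bruhat-maximum of `{w ·_J s, w}` (equivalently, the longer
of the two), for `b = 0` the Bruhat-minimum (the shorter of the two). -/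
noncomputable def phiJ (J : Set B) (i : B) (b : Bool) (w : W) : W :=
  if b then (if cs.length w ≤ cs.length (mulJ cs J w i) then mulJ cs J w i else w)
  else (if cs.length (mulJ cs J w i) ≤ cs.length w then mulJ cs J w i else w)

/-- `φ_{J,σ|_k,b|_k}(w)`: the composition `φ_{J,s_k,b_k} ∘ ⋯ ∘ φ_{J,s_1,b_1}` over the
length-`k` prefix of the word, applied to `w`. -/
noncomputable def phiJUpTo (J : Set B) {n : ℕ} (σ : Fin n → B) (b : Fin n → Bool)
    (k : ℕ) (w : W) : W :=
  ((List.ofFn fun i : Fin n => ((σ i : B), (b i : Bool))).take k).foldl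
    (fun v p => phiJ cs J p.1 p.2 v) w

/-- `φ_{J,σ,b} = φ_{J,s_n,b_n} ∘ ⋯ ∘ φ_{J,s_1,b_1}`. -/
noncomputable def phiJSeq (J : Set B) {n : ℕ} (σ : Fin n → B) (b : Fin n → Bool) (w : W) : W :=
  phiJUpTo cs J σ b n w

/-- `φ_{s,b}(w)`: `max(ws, w)` for `b = 1`, `min(ws, w)` for `b = 0` (in Bruhat order;
equivalently by length, since `w` and `ws` are Bruhat-comparable). -/
noncomputable def phi (i : B) (b : Bool) (w : W) : W :=
  if b then (if cs.length w ≤ cs.length (w * cs.simple i) then w * cs.simple i else w)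
  else (if cs.length (w * cs.simple i) ≤ cs.length w then w * cs.simple i else w)

/-- `φ_{σ|_k,b|_k}(w)` (the case `J = ∅`). -/
noncomputable def phiUpTo {n : ℕ} (σ : Fin n → B) (b : Fin n → Bool) (k : ℕ) (w : W) : W :=
  ((List.ofFn fun i : Fin n => ((σ i : B), (b i : Bool))).take k).foldl
    (fun v p => phi cs p.1 p.2 v) w

/-- `φ_{σ,b}(w)` (the case `J = ∅`). -/
noncomputable def phiSeq {n : ℕ} (σ : Fin n → B) (b : Fin n → Bool) (w : W) : W :=
  phiUpTo cs σ b n w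

/-- `b` is a `(σ,J)`-good word for `w`: `φ_{σ,b}(w) = w`, and for each left descent
`s ∈ D_L(w) ∩ J` there is a position `i` with
`φ_{σ|_{i-1},b|_{i-1}}(w) · s_i = s · φ_{σ|_{i-1},b|_{i-1}}(w)`. -/
def Good (J : Set B) {n : ℕ} (σ : Fin n → B) (w : W) (b : Fin n → Bool) : Prop :=
  phiSeq cs σ b w = w ∧
  ∀ i0 ∈ J, cs.length (cs.simple i0 * w) < cs.length w →
    ∃ i : Fin n,
      cs.simple i0 * phiUpTo cs σ b (i : ℕ) w = phiUpTo cs σ b (i : ℕ) w * cs.simple (σ i)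

/-- `|b| = b_1 + ⋯ + b_n`. -/
def wt {n : ℕ} (b : Fin n → Bool) : ℕ := ∑ i, if b i then 1 else 0

/-- Left weak order: `w' ≤_L w` iff `w = u * w'` with `ℓ(w) = ℓ(u) + ℓ(w')`. -/
def leL (w' w : W) : Prop :=
  ∃ u : W, w = u * w' ∧ cs.length w = cs.length u + cs.length w'

end Paper

/-!
A word with all `b_k = 1` only ever moves `w` up, so `φ_{J,σ,(1,…,1)}(w) = w` exactly when no
`w s` with `s ∈ S` is a longer element of `ᴶW`; the longest element of `ᴶW` is such a `w`.
For any such `w`, with `u_J` the longest element of `W_J`, every simple reflection is a right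
descent of `u_J w`: an ascent `w < ws` leaving `ᴶW` forces `ws = r w` for a reflection
`r ∈ W_J`, and `u_J r < u_J`. Hence `u_J w = w₀` and `w` is unique, so the only `(w, b)` with
`|b| = n` counted by `c_J(σ)` is (longest element of `ᴶW`, `(1,…,1)`).
The length theory used (strong exchange, `ℓ(u w) = ℓ(u) + ℓ(w)` on `W_J × ᴶW`,
`ℓ(v w₀) = ℓ(w₀) - ℓ(v)`) is derived from Tits' sign cocycle `W → (W → ℤˣ) ⋊ W`.
-/

namespace Paper

variable {B W : Type*} [Group W] {M : CoxeterMatrix B} (cs : CoxeterSystem M W)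

section InversionSign

open scoped Classical

theorem prod_map_alternatingWord_two_mul {G : Type*} [Monoid G] (f : B → G) (i j : B)
    (p : ℕ) : ((CoxeterSystem.alternatingWord i j (2 * p)).map f).prod = (f i * f j) ^ p := by
  induction p with
  | zero => simp [CoxeterSystem.alternatingWord]
  | succ p ih =>
    simp [show 2 * (p + 1) = 2 * p + 1 + 1 by ring, CoxeterSystem.alternatingWord, ← ih,
      pow_succ]

theorem even_count_leftInvSeq_alternatingWord (i j : B) (t : W) :
    Even ((cs.leftInvSeq (CoxeterSystem.alternatingWord i j (2 * M i j))).count t) := by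
  set L := cs.leftInvSeq (CoxeterSystem.alternatingWord i j (2 * M i j))
  have hlen : L.length = 2 * M i j := by simp [L]
  have hget : ∀ k (hk : k < L.length), L[k] = cs.simple i * (cs.simple j * cs.simple i) ^ k := by
    intro k hk
    rw [cs.getElem_leftInvSeq_alternatingWord i j (M i j) k (by omega),
      cs.prod_alternatingWord_eq_mul_pow, if_neg (by simp [parity_simps]),
      show (2 * k + 1) / 2 = k by omega]
  have hperiod : L.drop (M i j) = L.take (M i j) := by
    refine List.ext_getElem (by simp only [List.length_drop, List.length_take]; omega)
      fun k hk _ => ?_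
    simp only [List.length_drop] at hk
    rw [List.getElem_drop, List.getElem_take, hget _ (by omega), hget _ (by omega), pow_add,
      M.symmetric, cs.simple_mul_simple_pow, one_mul]
  rw [← List.take_append_drop (M i j) L, List.count_append, hperiod]
  exact ⟨_, rfl⟩

def conjArg : W →* MulAut (W → ℤˣ) where
  toFun w :=
    { toFun := fun f t => f (w⁻¹ * t * w)
      invFun := fun f t => f (w * t * w⁻¹)
      left_inv := fun f => by funext t; simp [mul_assoc]
      right_inv := fun f => by funext t; simp [mul_assoc]
      map_mul' := fun _ _ => rfl }
  map_one' := by ext; simp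
  map_mul' _ _ := by ext; simp [mul_assoc]

noncomputable def signGen (i : B) : (W → ℤˣ) ⋊[conjArg] W :=
  ⟨fun t => if t = cs.simple i then -1 else 1, cs.simple i⟩

theorem prod_map_signGen (ω : List B) :
    (ω.map (signGen cs)).prod = ⟨fun t => (-1) ^ (cs.leftInvSeq ω).count t, cs.wordProd ω⟩ := by
  induction ω with
  | nil => rfl
  | cons i ω ih =>
    rw [List.map_cons, List.prod_cons, ih]
    refine SemidirectProduct.ext (funext fun t => ?_) (cs.wordProd_cons i ω).symm
    have hcount : ((cs.leftInvSeq ω).map (MulAut.conj (cs.simple i))).count t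
        = (cs.leftInvSeq ω).count ((cs.simple i)⁻¹ * t * cs.simple i) := by
      rw [← List.count_map_of_injective _ _ (MulAut.conj (cs.simple i)).injective
        ((cs.simple i)⁻¹ * t * cs.simple i)]
      simp [mul_assoc]
    simp only [SemidirectProduct.mul_left]
    show (if t = cs.simple i then (-1 : ℤˣ) else 1) * (-1) ^ _ = (-1) ^ (List.count t
      (cs.simple i :: (cs.leftInvSeq ω).map (MulAut.conj (cs.simple i))))
    rw [List.count_cons, hcount, pow_add]
    by_cases h : t = cs.simple i
    · simp [h, signGen]
    · simp [h, Ne.symm h, signGen]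

theorem signGen_mul_signGen_pow (i j : B) : (signGen cs i * signGen cs j) ^ M i j = 1 := by
  rw [← prod_map_alternatingWord_two_mul, prod_map_signGen]
  refine SemidirectProduct.ext (funext fun t => ?_) ?_
  · exact (even_count_leftInvSeq_alternatingWord cs i j t).neg_one_pow
  · simp [cs.prod_alternatingWord_eq_mul_pow, cs.simple_mul_simple_pow]

noncomputable def signRep : W →* (W → ℤˣ) ⋊[conjArg] W :=
  cs.lift ⟨signGen cs, fun i j => signGen_mul_signGen_pow cs i j⟩

/-- Tits' sign cocycle. -/
noncomputable def inversionSign (w t : W) : ℤˣ := (signRep cs w).left t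

theorem signRep_simple (i : B) : signRep cs (cs.simple i) = signGen cs i :=
  cs.lift_apply_simple _ i

theorem signRep_wordProd (ω : List B) :
    signRep cs (cs.wordProd ω) = (ω.map (signGen cs)).prod := by
  rw [CoxeterSystem.wordProd, map_list_prod, List.map_map]
  congr 2
  exact funext (signRep_simple cs)

theorem inversionSign_wordProd (ω : List B) (t : W) :
    inversionSign cs (cs.wordProd ω) t = (-1) ^ (cs.leftInvSeq ω).count t := by
  rw [inversionSign, signRep_wordProd, prod_map_signGen]

theorem signRep_right (w : W) : (signRep cs w).right = w := by
  obtain ⟨ω, rfl⟩ := cs.wordProd_surjective w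
  rw [signRep_wordProd, prod_map_signGen]

theorem inversionSign_mul (x y t : W) :
    inversionSign cs (x * y) t = inversionSign cs x t * inversionSign cs y (x⁻¹ * t * x) := by
  simp only [inversionSign, map_mul, SemidirectProduct.mul_left, signRep_right]
  rfl

theorem inversionSign_simple (i : B) (t : W) :
    inversionSign cs (cs.simple i) t = if t = cs.simple i then -1 else 1 := by
  rw [inversionSign, signRep_simple]
  rfl

theorem inversionSign_one (t : W) : inversionSign cs 1 t = 1 := by
  simp [inversionSign]

theorem inversionSign_inv (x t : W) :
    inversionSign cs x⁻¹ t = inversionSign cs x (x * t * x⁻¹) := by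
  have h := inversionSign_mul cs x x⁻¹ (x * t * x⁻¹)
  rw [mul_inv_cancel, show x⁻¹ * (x * t * x⁻¹) * x = t by group] at h
  rw [← Int.units_inv_eq_self (inversionSign cs x (x * t * x⁻¹)), eq_inv_iff_mul_eq_one,
    mul_comm, ← h]
  simp [inversionSign]

theorem inversionSign_self {t : W} (ht : cs.IsReflection t) : inversionSign cs t t = -1 := by
  obtain ⟨v, i, rfl⟩ := ht
  rw [mul_assoc, inversionSign_mul, inversionSign_mul, inversionSign_simple, inversionSign_inv,
    if_pos (by group), show v * ((cs.simple i)⁻¹ * (v⁻¹ * (v * (cs.simple i * v⁻¹)) * v)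
      * cs.simple i) * v⁻¹ = v * (cs.simple i * v⁻¹) by group, mul_left_comm, Int.units_mul_self,
    mul_one]

theorem mem_leftInvSeq_of_inversionSign_eq_neg_one {ω : List B} {t : W}
    (h : inversionSign cs (cs.wordProd ω) t = -1) : t ∈ cs.leftInvSeq ω := by
  rw [inversionSign_wordProd] at h
  by_contra hmem
  rw [List.count_eq_zero_of_not_mem hmem, pow_zero] at h
  exact absurd h (by decide)

theorem length_mul_lt_of_inversionSign_eq_neg_one {w t : W} (h : inversionSign cs w t = -1) :
    cs.length (t * w) < cs.length w := by
  obtain ⟨ω, hred, rfl⟩ := cs.exists_isReduced w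
  obtain ⟨k, hk, rfl⟩ :=
    List.mem_iff_getElem.mp (mem_leftInvSeq_of_inversionSign_eq_neg_one cs h)
  rw [cs.length_leftInvSeq] at hk
  rw [← List.getD_eq_getElem _ 1, cs.getD_leftInvSeq_mul_wordProd, hred]
  calc cs.length (cs.wordProd (ω.eraseIdx k))
      _ ≤ (ω.eraseIdx k).length := cs.length_wordProd_le _
      _ < ω.length := by rw [List.length_eraseIdx_of_lt hk]; omega

theorem inversionSign_eq_neg_one_iff {t : W} (ht : cs.IsReflection t) (w : W) :
    inversionSign cs w t = -1 ↔ cs.length (t * w) < cs.length w := by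
  refine ⟨length_mul_lt_of_inversionSign_eq_neg_one cs, fun hlt => ?_⟩
  -- Otherwise `inversionSign_self` makes `t` a left inversion of `t w`.
  by_contra hsign
  have h := inversionSign_mul cs t (t * w) t
  rw [← mul_assoc, ht.mul_self, one_mul, inversionSign_self cs ht,
    show t⁻¹ * t * t = t by group, (Int.units_eq_one_or _).resolve_right hsign, neg_one_mul] at h
  have := length_mul_lt_of_inversionSign_eq_neg_one cs (neg_eq_iff_eq_neg.mp h.symm)
  rw [← mul_assoc, ht.mul_self, one_mul] at this
  omega

theorem inversionSign_eq_one_iff {t : W} (ht : cs.IsReflection t) (w : W) :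
    inversionSign cs w t = 1 ↔ cs.length w < cs.length (t * w) := by
  have hsign : inversionSign cs w t = 1 ↔ ¬ inversionSign cs w t = -1 := by
    rcases Int.units_eq_one_or (inversionSign cs w t) with h | h <;> rw [h] <;> decide
  have := ht.length_mul_right_ne w
  rw [hsign, inversionSign_eq_neg_one_iff cs ht]
  omega

theorem length_simple_mul_mul_lt_iff (x y : W) (i : B) :
    cs.length (cs.simple i * (x * y)) < cs.length (x * y) ↔
      (cs.length (cs.simple i * x) < cs.length x ↔
        cs.length y < cs.length (x⁻¹ * cs.simple i * x * y)) := by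
  have hs := cs.isReflection_simple i
  have hr : cs.IsReflection (x⁻¹ * cs.simple i * x) := by simpa using hs.conj x⁻¹
  rw [← inversionSign_eq_neg_one_iff cs hs, ← inversionSign_eq_neg_one_iff cs hs,
    ← inversionSign_eq_one_iff cs hr, inversionSign_mul]
  rcases Int.units_eq_one_or (inversionSign cs x (cs.simple i)) with h | h <;>
  rcases Int.units_eq_one_or (inversionSign cs y (x⁻¹ * cs.simple i * x)) with h' | h' <;>
  rw [h, h'] <;> decide

end InversionSign

section Longest

variable {w₀ : W}

theorem length_mul_add_length_of_forall_length_le (hw₀ : ∀ v, cs.length v ≤ cs.length w₀)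
    (v : W) : cs.length (v * w₀) + cs.length v = cs.length w₀ := by
  induction v using cs.simple_induction_left with
  | one => simp
  | mul_simple_left v i ih =>
    have hdesc := length_simple_mul_mul_lt_iff cs v w₀ i
    rw [iff_false_right (not_lt.2 (hw₀ _))] at hdesc
    rw [mul_assoc]
    rcases cs.length_simple_mul (v * w₀) i with h | h <;>
    rcases cs.length_simple_mul v i with h' | h' <;> omega

theorem eq_of_forall_length_mul_simple_lt (hw₀ : ∀ v, cs.length v ≤ cs.length w₀) {y : W}
    (hy : ∀ i, cs.length (y * cs.simple i) < cs.length y) : y = w₀ := by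
  by_contra hne
  obtain ⟨i, hi⟩ := cs.exists_leftDescent_of_ne_one (w := y⁻¹ * w₀) (fun h => hne (by
    rw [inv_mul_eq_one] at h; exact h))
  have hsum := length_mul_add_length_of_forall_length_le cs hw₀ y⁻¹
  rw [cs.length_inv] at hsum
  have := cs.length_mul_le (y * cs.simple i) (cs.simple i * (y⁻¹ * w₀))
  rw [show y * cs.simple i * (cs.simple i * (y⁻¹ * w₀)) = w₀ by
    simp [mul_assoc, cs.simple_mul_simple_cancel_left]] at this
  have := hy i
  have : cs.length (cs.simple i * (y⁻¹ * w₀)) < cs.length (y⁻¹ * w₀) := hi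
  omega

end Longest

section Parabolic

variable {J : Set B}

theorem simple_mem_WJ {j : B} (hj : j ∈ J) : cs.simple j ∈ WJ cs J :=
  Subgroup.subset_closure ⟨j, hj, rfl⟩

theorem WJ.induction_left {p : W → Prop} (one : p 1)
    (mul_simple : ∀ j ∈ J, ∀ y ∈ WJ cs J, p y → p (cs.simple j * y)) {u : W}
    (hu : u ∈ WJ cs J) : p u := by
  induction hu using Subgroup.closure_induction_left with
  | one => exact one
  | mul_left x hx y hy ih =>
    obtain ⟨j, hj, rfl⟩ := hx
    exact mul_simple j hj y hy ih
  | inv_mul_cancel x hx y hy ih =>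
    obtain ⟨j, hj, rfl⟩ := hx
    rw [cs.inv_simple]
    exact mul_simple j hj y hy ih

theorem inversionSign_eq_one_of_mem_WJ {u : W} (hu : u ∈ WJ cs J) :
    ∀ t ∉ WJ cs J, inversionSign cs u t = 1 := by
  refine WJ.induction_left cs (p := fun u => ∀ t ∉ WJ cs J, inversionSign cs u t = 1)
    (fun t _ => inversionSign_one cs t) (fun j hj y _ ih t ht => ?_) hu
  have hsj := simple_mem_WJ cs hj
  rw [inversionSign_mul, inversionSign_simple, if_neg (by rintro rfl; exact ht hsj), one_mul]
  refine ih _ fun hmem => ht ?_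
  simpa [mul_assoc] using mul_mem (mul_mem hsj hmem) (inv_mem hsj)

def IsLocalMaxRep (J : Set B) (w : W) : Prop :=
  ∀ i, IsMinRep cs J (w * cs.simple i) → cs.length (w * cs.simple i) < cs.length w

theorem IsMinRep.length_lt_length_mul {w t : W} (hw : IsMinRep cs J w)
    (ht : cs.IsReflection t) (htJ : t ∈ WJ cs J) : cs.length w < cs.length (t * w) :=
  lt_of_le_of_ne (hw t htJ) (ht.length_mul_right_ne w).symm

theorem IsMinRep.length_mul {w u : W} (hw : IsMinRep cs J w) (hu : u ∈ WJ cs J) :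
    cs.length (u * w) = cs.length u + cs.length w := by
  refine WJ.induction_left cs (p := fun u => cs.length (u * w) = cs.length u + cs.length w)
    (by simp) (fun j hj y hy ih => ?_) hu
  have hr : y⁻¹ * cs.simple j * y ∈ WJ cs J :=
    mul_mem (mul_mem (inv_mem hy) (simple_mem_WJ cs hj)) hy
  have hdesc := length_simple_mul_mul_lt_iff cs y w j
  have := hw.length_lt_length_mul cs (by simpa using (cs.isReflection_simple j).conj y⁻¹) hr
  rw [iff_true_right this] at hdesc
  rw [mul_assoc]
  rcases cs.length_simple_mul (y * w) j with h | h <;>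
  rcases cs.length_simple_mul y j with h' | h' <;> omega

theorem IsMinRep.mul_simple {w : W} {i : B} (hw : IsMinRep cs J w)
    (hasc : cs.length w < cs.length (w * cs.simple i))
    (hr : w * cs.simple i * w⁻¹ ∉ WJ cs J) : IsMinRep cs J (w * cs.simple i) := by
  intro u hu
  set r := w * cs.simple i * w⁻¹
  have hrefl : cs.IsReflection r := (cs.isReflection_simple i).conj w
  have ht : u * r * u⁻¹ ∉ WJ cs J := fun h => hr (by
    simpa [mul_assoc] using mul_mem (mul_mem (inv_mem hu) h) hu)
  have hsign : inversionSign cs (u * w) (u * r * u⁻¹) = 1 := by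
    rw [inversionSign_mul, inversionSign_eq_one_of_mem_WJ cs hu _ ht, one_mul,
      show u⁻¹ * (u * r * u⁻¹) * u = r by group, inversionSign_eq_one_iff cs hrefl]
    simpa [r] using hasc
  rw [inversionSign_eq_one_iff cs (hrefl.conj u),
    show u * r * u⁻¹ * (u * w) = u * (w * cs.simple i) by simp [r, mul_assoc]] at hsign
  have := hw u hu
  have := cs.length_mul_simple w i
  omega

theorem mul_eq_of_isLocalMaxRep {x uJ w₀ : W} (hx : IsMinRep cs J x)
    (hxmax : IsLocalMaxRep cs J x) (huJ : uJ ∈ WJ cs J)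
    (huJmax : ∀ u ∈ WJ cs J, cs.length u ≤ cs.length uJ)
    (hw₀ : ∀ v, cs.length v ≤ cs.length w₀) : uJ * x = w₀ := by
  refine eq_of_forall_length_mul_simple_lt cs hw₀ fun i => ?_
  rw [hx.length_mul cs huJ]
  rcases (cs.length_mul_simple_ne x i).lt_or_gt with hdesc | hasc
  · calc cs.length (uJ * x * cs.simple i) ≤ cs.length uJ + cs.length (x * cs.simple i) := by
          rw [mul_assoc]; exact cs.length_mul_le _ _
      _ < cs.length uJ + cs.length x := by omega
  · -- `x s_i` leaves `ᴶW`, so `x s_i = r x` for a reflection `r ∈ W_J`, and `uJ r < uJ`.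
    have hr : x * cs.simple i * x⁻¹ ∈ WJ cs J := by
      by_contra hr
      exact absurd (hxmax i (hx.mul_simple cs hasc hr)) (by omega)
    have hlt := (((cs.isReflection_simple i).conj x).length_mul_left_ne uJ).lt_of_le
      (huJmax _ (mul_mem huJ hr))
    calc cs.length (uJ * x * cs.simple i)
        = cs.length (uJ * (x * cs.simple i * x⁻¹) * x) := by group
      _ ≤ cs.length (uJ * (x * cs.simple i * x⁻¹)) + cs.length x := cs.length_mul_le _ _
      _ < cs.length uJ + cs.length x := by omega

theorem eq_of_isLocalMaxRep [Finite W] {x y : W} (hx : IsMinRep cs J x)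
    (hxmax : IsLocalMaxRep cs J x) (hy : IsMinRep cs J y) (hymax : IsLocalMaxRep cs J y) :
    x = y := by
  obtain ⟨w₀, hw₀⟩ := Finite.exists_max cs.length
  obtain ⟨⟨uJ, huJ⟩, huJmax⟩ := Finite.exists_max fun u : WJ cs J => cs.length u
  have huJmax' : ∀ u ∈ WJ cs J, cs.length u ≤ cs.length uJ := fun u hu => huJmax ⟨u, hu⟩
  exact mul_left_cancel <| (mul_eq_of_isLocalMaxRep cs hx hxmax huJ huJmax' hw₀).trans
    (mul_eq_of_isLocalMaxRep cs hy hymax huJ huJmax' hw₀).symm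

end Parabolic

theorem le_foldl_of_forall_le {α β : Type*} (g : α → ℕ) (f : α → β → α) (l : List β)
    (hf : ∀ p ∈ l, ∀ x, g x ≤ g (f x p)) (x : α) : g x ≤ g (l.foldl f x) := by
  induction l generalizing x with
  | nil => rfl
  | cons p l ih =>
    exact (hf p List.mem_cons_self x).trans
      (ih (fun q hq => hf q (List.mem_cons_of_mem p hq)) (f x p))

theorem foldl_eq_self_iff {α β : Type*} (g : α → ℕ) (f : α → β → α) (l : List β)
    (hf : ∀ p ∈ l, ∀ x, f x p = x ∨ g x < g (f x p)) (x : α) :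
    l.foldl f x = x ↔ ∀ p ∈ l, f x p = x := by
  induction l generalizing x with
  | nil => simp
  | cons p l ih =>
    have hf' : ∀ q ∈ l, ∀ x, f x q = x ∨ g x < g (f x q) :=
      fun q hq => hf q (List.mem_cons_of_mem p hq)
    rw [List.foldl_cons, List.forall_mem_cons]
    rcases hf p List.mem_cons_self x with h | h
    · rw [h]
      simpa using ih hf' x
    · refine iff_of_false (fun heq => ?_) (fun h' => by rw [h'.1] at h; omega)
      have := le_foldl_of_forall_le g f l
        (fun q hq y => (hf' q hq y).elim (fun h => (congrArg g h).ge) le_of_lt) (f x p)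
      rw [heq] at this
      omega

section PhiJ

variable {J : Set B}

theorem phiJ_true_eq_or_length_lt (i : B) (w : W) :
    phiJ cs J i true w = w ∨ cs.length w < cs.length (phiJ cs J i true w) := by
  have := cs.length_mul_simple_ne w i
  simp only [phiJ, mulJ, if_true]
  split_ifs <;> first | exact Or.inl rfl | (right; omega)

theorem phiJ_true_eq_self_iff (i : B) (w : W) :
    phiJ cs J i true w = w ↔
      (IsMinRep cs J (w * cs.simple i) → cs.length (w * cs.simple i) < cs.length w) := by
  have := cs.length_mul_simple_ne w i
  simp only [phiJ, mulJ, if_true]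
  split_ifs with hm hle
  · exact iff_of_false (fun h => this (by rw [h])) fun h => by have := h hm; omega
  · exact iff_of_true rfl fun _ => by omega
  all_goals exact iff_of_true rfl fun h => absurd h hm

theorem phiJSeq_true_eq_self_iff {n : ℕ} {σ : Fin n → B} (hσ : ∀ j, ∃ k, σ k = j) (w : W) :
    phiJSeq cs J σ (fun _ => true) w = w ↔ IsLocalMaxRep cs J w := by
  rw [IsLocalMaxRep, phiJSeq, phiJUpTo, List.take_of_length_le (by simp),
    foldl_eq_self_iff cs.length]
  · simp only [List.mem_ofFn, forall_exists_index, forall_apply_eq_imp_iff,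
      phiJ_true_eq_self_iff]
    exact ⟨fun h i => by obtain ⟨k, rfl⟩ := hσ i; exact h k, fun h k => h (σ k)⟩
  · simp only [List.mem_ofFn, forall_exists_index, forall_apply_eq_imp_iff]
    exact fun k => phiJ_true_eq_or_length_lt cs (σ k)

end PhiJ

theorem wt_const_true (n : ℕ) : wt (fun _ : Fin n => true) = n := by
  simp [wt]

theorem wt_lt_of_ne_const_true {n : ℕ} {b : Fin n → Bool} (hb : b ≠ fun _ => true) :
    wt b < n := by
  obtain ⟨k, hk⟩ : ∃ k, b k = false := by
    by_contra! h
    exact hb (funext fun k => by simpa using h k)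
  calc wt b < ∑ _k : Fin n, 1 :=
        Finset.sum_lt_sum (fun k _ => by split_ifs <;> simp) ⟨k, Finset.mem_univ k, by simp [hk]⟩
    _ = n := by simp

theorem exists_degree_lt_sum_ite_X_pow_wt {ι : Type*} [Fintype ι] {n : ℕ}
    (C : ι → (Fin n → Bool) → Prop) [∀ x b, Decidable (C x b)] (x₀ : ι)
    (hC : ∀ x, C x (fun _ => true) ↔ x = x₀) :
    ∃ r : ℤ[X], r.degree < n ∧
      ∑ x, ∑ b, (if C x b then (X : ℤ[X]) ^ wt b else 0) = X ^ n + r := by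
  refine ⟨∑ x, ∑ b ∈ Finset.univ.erase (fun _ => true), if C x b then X ^ wt b else 0, ?_, ?_⟩
  · rw [← mem_degreeLT]
    refine sum_mem fun x _ => sum_mem fun b hb => ?_
    split_ifs
    · rw [mem_degreeLT, degree_X_pow]
      exact_mod_cast wt_lt_of_ne_const_true (Finset.mem_erase.mp hb).1
    · exact zero_mem _
  · conv_lhs => enter [2, x]; rw [← Finset.add_sum_erase _ _ (Finset.mem_univ fun _ => true)]
    rw [Finset.sum_add_distrib,
      Finset.sum_eq_single x₀ (fun x _ hx => if_neg ((hC x).not.mpr hx)) (by simp),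
      if_pos ((hC x₀).mpr rfl), wt_const_true]

end Paper

namespace Paper

open scoped Classical in
/-- If the word `σ = (s_1,…,s_n)` contains every simple reflection of `S`,
then the unique maximal element of `ᴶW` is the only `w ∈ ᴶW` satisfying
`φ_{J,σ,(1,…,1)}(w) = w`. Consequently `c_J(σ)` is a monic polynomial of degree `n` in `q`:
`c_J(σ) = q^n + (terms of degree < n)`. -/
theorem cJ_monic {B W : Type*} [Group W] [Fintype W] {M : CoxeterMatrix B}
    (cs : CoxeterSystem M W) (J : Set B) {n : ℕ} (σ : Fin n → B)
    (hσ : ∀ j : B, ∃ i : Fin n, σ i = j) :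
    (∃! w : W, IsMinRep cs J w ∧ phiJSeq cs J σ (fun _ => true) w = w) ∧
    (∀ w : W, IsMinRep cs J w → phiJSeq cs J σ (fun _ => true) w = w →
      ∀ v : W, IsMinRep cs J v → cs.length v ≤ cs.length w) ∧
    (∃ r : ℤ[X], r.degree < n ∧
      (∑ w : W, ∑ b : Fin n → Bool,
          (if IsMinRep cs J w ∧ phiJSeq cs J σ b w = w then (X : ℤ[X]) ^ wt b else 0))
        = X ^ n + r) := by
  have : Nonempty {w : W // IsMinRep cs J w} := ⟨⟨1, fun u _ => by simp⟩⟩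
  obtain ⟨⟨wmax, hwmax⟩, hwmax_le⟩ :=
    Finite.exists_max fun w : {w : W // IsMinRep cs J w} => cs.length w.1
  have htop : IsLocalMaxRep cs J wmax := fun i hi =>
    (hwmax_le ⟨_, hi⟩).lt_of_ne (cs.length_mul_simple_ne wmax i)
  have hfixed : ∀ w, IsMinRep cs J w ∧ phiJSeq cs J σ (fun _ => true) w = w ↔ w = wmax := by
    intro w
    rw [phiJSeq_true_eq_self_iff cs hσ]
    exact ⟨fun ⟨hw, hwtop⟩ => eq_of_isLocalMaxRep cs hw hwtop hwmax htop,
      by rintro rfl; exact ⟨hwmax, htop⟩⟩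
  refine ⟨⟨wmax, (hfixed wmax).2 rfl, fun w hw => (hfixed w).1 hw⟩, fun w hw hfix v hv => ?_,
    exists_degree_lt_sum_ite_X_pow_wt _ wmax hfixed⟩
  rw [(hfixed w).1 ⟨hw, hfix⟩]
  exact hwmax_le ⟨v, hv⟩

end Paper
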